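/- Let p ≥ 2 and 2 ≤ n ≤ p−1 be integers, T > 0, h ≥ 1, R > 1, C_p > 0, C > 0. Let a_p : [0,T] × ℝ → ℝ be such that ξ ↦ a_p(t,ξ) is differentiable and |∂_ξ a_p(t,ξ)| ≥ C_p·|ξ|^{p−1} for all t ∈ [0,T] and |ξ| ≥ R. Let ω : ℝ → ℝ satisfy ω(ξ) = sgn(∂_ξ a_p(t,ξ)) for all |ξ| ≥ R and all t ∈ [0,T]. Let ψ : ℝ → ℝ satisfy 0 ≤ ψ ≤ 1, ψ(y) = 1 for |y| ≤ 1/2 and ψ(y) = 0 for |y| ≥ 1. Let b : [0,T] × ℝ × ℝ → ℂ satisfy |Im b(t,x,ξ)| ≤ C·⟨ξ⟩_h^{p−n}·⟨x⟩^{−(p−n)/(p−1)} for all t, x, ξ. If M ≥ 2^{(p−1)/2}·C/C_p, then there exists C' > 0 (one may take C' = C·2^{(p−n)/(p−1)}) such that for all t ∈ [0,T], x ∈ ℝ, and ξ with |ξ| ≥ hR, one has −Im b(t,x,ξ) + M·∂_ξ a_p(t,ξ)·ω(ξ/h)·⟨ξ⟩_h^{−n+1}·⟨x⟩^{−(p−n)/(p−1)}·ψ(⟨x⟩/⟨ξ⟩_h^{p−1})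 ≥ −C'. -/

import Mathlib

/-!
Since `|ξ| ≥ hR`, the points `ξ` and `ξ / h` lie in one component of `{|η| ≥ R}`, where
`∂_ξ a_p` does not vanish, so `∂_ξ a_p(t, ξ) ω(ξ / h) = |∂_ξ a_p(t, ξ)|` and the cut-off term is
nonnegative. Where `ψ = 1`, the bound `⟨ξ⟩ₕ ≤ √2 |ξ|` and the choice of `M` give
`M |∂_ξ a_p| ⟨ξ⟩ₕ^{1-n} ≥ C ⟨ξ⟩ₕ^{p-n}`, which absorbs `Im b`. Elsewhere
`⟨ξ⟩ₕ^{p-1} < 2 ⟨x⟩`, and then `|Im b| ≤ C 2^{(p-n)/(p-1)}`.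
-/

open MeasureTheory Real

noncomputable section

/-- The Japanese bracket `⟨x⟩ = (1 + x²)^(1/2)`. -/
def jb (x : ℝ) : ℝ := Real.sqrt (1 + x ^ 2)

/-- `⟨ξ⟩ₕ = (h² + ξ²)^(1/2)`. -/
def jbh (h ξ : ℝ) : ℝ := Real.sqrt (h ^ 2 + ξ ^ 2)

lemma jb_pos (x : ℝ) : 0 < jb x := Real.sqrt_pos.mpr (by positivity)

lemma jbh_pos {h : ℝ} (hh : h ≠ 0) (ξ : ℝ) : 0 < jbh h ξ := Real.sqrt_pos.mpr (by positivity)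

lemma jbh_le_sqrt_two_mul_abs {h ξ : ℝ} (hhξ : |h| ≤ |ξ|) : jbh h ξ ≤ √2 * |ξ| := by
  have hsq : h ^ 2 + ξ ^ 2 ≤ 2 * ξ ^ 2 := by nlinarith [sq_le_sq.mpr hhξ]
  calc jbh h ξ ≤ √(2 * ξ ^ 2) := Real.sqrt_le_sqrt hsq
    _ = √2 * |ξ| := by rw [Real.sqrt_mul zero_le_two, Real.sqrt_sq_eq_abs]

lemma jbh_rpow_le {h ξ r : ℝ} (hhξ : |h| ≤ |ξ|) (hr : 0 ≤ r) :
    jbh h ξ ^ r ≤ 2 ^ (r / 2) * |ξ| ^ r :=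
  calc jbh h ξ ^ r ≤ (√2 * |ξ|) ^ r :=
        Real.rpow_le_rpow (Real.sqrt_nonneg _) (jbh_le_sqrt_two_mul_abs hhξ) hr
    _ = 2 ^ (r / 2) * |ξ| ^ r := by
        rw [Real.mul_rpow (Real.sqrt_nonneg 2) (abs_nonneg ξ), Real.sqrt_eq_rpow,
          ← Real.rpow_mul zero_le_two, one_div_mul_eq_div]

/-- By Darboux's theorem a derivative that does not vanish on an interval keeps its sign there. -/
lemma deriv_mul_sign_deriv_eq_abs {f : ℝ → ℝ} (hf : Differentiable ℝ f) {a b : ℝ}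
    (hne : ∀ y ∈ Set.uIcc a b, deriv f y ≠ 0) :
    deriv f a * Real.sign (deriv f b) = |deriv f a| := by
  rcases hasDerivWithinAt_forall_lt_or_forall_gt_of_forall_ne (convex_uIcc a b)
      (fun y _ => (hf y).hasDerivAt.hasDerivWithinAt) hne with hneg | hpos
  · rw [Real.sign_of_neg (hneg b Set.right_mem_uIcc),
      abs_of_neg (hneg a Set.left_mem_uIcc), mul_neg_one]
  · rw [Real.sign_of_pos (hpos b Set.right_mem_uIcc),
      abs_of_pos (hpos a Set.left_mem_uIcc), mul_one]

lemma abs_div_le_abs_of_mem_uIcc {h ξ y : ℝ} (hh : 1 ≤ h) (hy : y ∈ Set.uIcc ξ (ξ / h)) :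
    |ξ| / h ≤ |y| := by
  have hh0 : 0 < h := by linarith
  rw [div_le_iff₀ hh0]
  rcases le_total 0 ξ with hξ | hξ
  · have : ξ / h ≤ ξ := div_le_self hξ hh
    rw [Set.uIcc_of_ge this] at hy
    have : ξ ≤ y * h := (div_le_iff₀ hh0).mp hy.1
    rw [abs_of_nonneg hξ, abs_of_nonneg (le_trans (div_nonneg hξ hh0.le) hy.1)]
    linarith
  · have : ξ ≤ ξ / h := by rw [le_div_iff₀ hh0]; nlinarith
    rw [Set.uIcc_of_le this] at hy
    have : y * h ≤ ξ := (le_div_iff₀ hh0).mp hy.2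
    rw [abs_of_nonpos hξ, abs_of_nonpos (le_trans hy.2 (div_nonpos_of_nonpos_of_nonneg hξ hh0.le))]
    linarith

lemma deriv_mul_sign_deriv_div_eq_abs {f : ℝ → ℝ} (hf : Differentiable ℝ f) {R h ξ : ℝ}
    (hne : ∀ y, R ≤ |y| → deriv f y ≠ 0) (hh : 1 ≤ h) (hξ : R ≤ |ξ| / h) :
    deriv f ξ * Real.sign (deriv f (ξ / h)) = |deriv f ξ| :=
  deriv_mul_sign_deriv_eq_abs hf fun y hy =>
    hne y (hξ.trans (abs_div_le_abs_of_mem_uIcc hh hy))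

lemma neg_mul_two_rpow_le_of_cutoff {ψ : ℝ → ℝ} (hψ0 : ∀ y, 0 ≤ ψ y)
    (hψ1 : ∀ y, |y| ≤ 1 / 2 → ψ y = 1) {B K J X C s e q r : ℝ}
    (hJ : 0 < J) (hX : 0 < X) (hC : 0 ≤ C) (hq : 0 ≤ q) (hrs : r = s + e) (hrq : r = s * q)
    (hB : |B| ≤ C * J ^ r * X ^ (-q)) (hK : C * J ^ s ≤ K) :
    -(C * 2 ^ q) ≤ -B + K * J ^ e * X ^ (-q) * ψ (X / J ^ s) := by
  have hJs : 0 < J ^ s := Real.rpow_pos_of_pos hJ s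
  have hXq : 0 < X ^ (-q) := Real.rpow_pos_of_pos hX _
  have hBle : B ≤ C * J ^ r * X ^ (-q) := (le_abs_self B).trans hB
  by_cases hnear : X / J ^ s ≤ 1 / 2
  · rw [hψ1 _ ((abs_of_pos (div_pos hX hJs)).trans_le hnear), mul_one]
    have : C * J ^ r * X ^ (-q) ≤ K * J ^ e * X ^ (-q) := by
      rw [hrs, Real.rpow_add hJ, ← mul_assoc]
      gcongr
    nlinarith [Real.rpow_nonneg (zero_le_two : (0 : ℝ) ≤ 2) q]
  · have hfar : J ^ s ≤ 2 * X := by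
      rw [not_le, lt_div_iff₀ hJs] at hnear; linarith
    have hsmall : C * J ^ r * X ^ (-q) ≤ C * 2 ^ q :=
      calc C * J ^ r * X ^ (-q) = C * (J ^ s) ^ q * X ^ (-q) := by rw [hrq, Real.rpow_mul hJ.le]
        _ ≤ C * (2 * X) ^ q * X ^ (-q) := by gcongr
        _ = C * 2 ^ q * (X ^ q * X ^ (-q)) := by rw [Real.mul_rpow zero_le_two hX.le]; ring
        _ = C * 2 ^ q := by rw [← Real.rpow_add hX, add_neg_cancel, Real.rpow_zero, mul_one]
    have : 0 ≤ K * J ^ e * X ^ (-q) * ψ (X / J ^ s) := by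
      have : 0 ≤ K := (mul_nonneg hC hJs.le).trans hK
      have := hψ0 (X / J ^ s)
      positivity
    linarith

theorem stmt12_general (p n : ℕ) (hp : 2 ≤ p) (hnp : n ≤ p - 1)
    (T h R Cp C : ℝ)
    (hh : 1 ≤ h) (hR : 1 < R) (hCp : 0 < Cp) (hC : 0 < C)
    (ap : ℝ → ℝ → ℝ)
    (hap_diff : ∀ t ∈ Set.Icc (0:ℝ) T, Differentiable ℝ (ap t))
    (hap_low : ∀ t ∈ Set.Icc (0:ℝ) T, ∀ ξ : ℝ, R ≤ |ξ| →
      Cp * |ξ| ^ (p - 1) ≤ |deriv (ap t) ξ|)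
    (ω : ℝ → ℝ)
    (hω : ∀ t ∈ Set.Icc (0:ℝ) T, ∀ ξ : ℝ, R ≤ |ξ| →
      ω ξ = Real.sign (deriv (ap t) ξ))
    (ψ : ℝ → ℝ) (hψ01 : ∀ y : ℝ, 0 ≤ ψ y ∧ ψ y ≤ 1)
    (hψ1 : ∀ y : ℝ, |y| ≤ 1 / 2 → ψ y = 1)
    (b : ℝ → ℝ → ℝ → ℂ)
    (hb : ∀ t ∈ Set.Icc (0:ℝ) T, ∀ x ξ : ℝ,
      |(b t x ξ).im| ≤ C * jbh h ξ ^ ((p:ℝ) - n) * jb x ^ (-(((p:ℝ) - n) / ((p:ℝ) - 1))))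
    (M : ℝ) (hM : (2:ℝ) ^ (((p:ℝ) - 1) / 2) * C / Cp ≤ M) :
    ∃ C' > 0, ∀ t ∈ Set.Icc (0:ℝ) T, ∀ x ξ : ℝ, h * R ≤ |ξ| →
      -C' ≤ -(b t x ξ).im +
        M * deriv (ap t) ξ * ω (ξ / h) * jbh h ξ ^ (-(n:ℝ) + 1) *
          jb x ^ (-(((p:ℝ) - n) / ((p:ℝ) - 1))) *
          ψ (jb x / jbh h ξ ^ ((p:ℝ) - 1)) := by
  have hp1 : (1 : ℝ) < p := by exact_mod_cast hp
  have hn : (n : ℝ) + 1 ≤ p := by exact_mod_cast (by omega : n + 1 ≤ p)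
  refine ⟨C * 2 ^ (((p:ℝ) - n) / ((p:ℝ) - 1)), by positivity, fun t ht x ξ hξ => ?_⟩
  have hR0 : 0 < R := by linarith
  have hξR : R ≤ |ξ| / h := by rw [le_div_iff₀ (by linarith)]; linarith
  have hsign : deriv (ap t) ξ * ω (ξ / h) = |deriv (ap t) ξ| := by
    rw [hω t ht _ (by rwa [abs_div, abs_of_pos (by linarith : 0 < h)])]
    refine deriv_mul_sign_deriv_div_eq_abs (hap_diff t ht) (fun y hRy hy0 => ?_) hh hξR
    have := hap_low t ht y hRy
    rw [hy0, abs_zero] at this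
    have : 0 < Cp * |y| ^ (p - 1) := by have : 0 < |y| := hR0.trans_le hRy; positivity
    linarith
  have hK : C * jbh h ξ ^ ((p:ℝ) - 1) ≤ M * |deriv (ap t) ξ| :=
    calc C * jbh h ξ ^ ((p:ℝ) - 1) ≤ C * (2 ^ (((p:ℝ) - 1) / 2) * |ξ| ^ (p - 1)) := by
          rw [← Real.rpow_natCast, Nat.cast_sub (by omega), Nat.cast_one]
          gcongr
          exact jbh_rpow_le (by rw [abs_of_pos (by linarith : 0 < h)]; nlinarith) (by linarith)
      _ ≤ M * (Cp * |ξ| ^ (p - 1)) := by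
          rw [div_le_iff₀ hCp] at hM
          nlinarith [pow_nonneg (abs_nonneg ξ) (p - 1)]
      _ ≤ M * |deriv (ap t) ξ| :=
          mul_le_mul_of_nonneg_left (hap_low t ht ξ (hξR.trans (div_le_self (abs_nonneg ξ) hh)))
            ((by positivity : (0 : ℝ) ≤ 2 ^ (((p:ℝ) - 1) / 2) * C / Cp).trans hM)
  rw [mul_assoc M, hsign]
  exact neg_mul_two_rpow_le_of_cutoff (fun y => (hψ01 y).1) hψ1
    (jbh_pos (by linarith) ξ) (jb_pos x) hC.le (div_nonneg (by linarith) (by linarith))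
    (by ring) (mul_div_cancel₀ _ (by linarith)).symm (hb t ht x ξ) hK

/-- lower bound for the term of order `p-n` after the `n`-th conjugation.
Under the stated assumptions, if `M ≥ 2^{(p-1)/2}·C/C_p` then there is `C' > 0` such
that for `|ξ| ≥ hR`,
`-Im b + M·∂_ξa_p·ω(ξ/h)·⟨ξ⟩ₕ^{-n+1}·⟨x⟩^{-(p-n)/(p-1)}·ψ(⟨x⟩/⟨ξ⟩ₕ^{p-1}) ≥ -C'`. -/
theorem stmt12 (p n : ℕ) (hp : 2 ≤ p) (hn2 : 2 ≤ n) (hnp : n ≤ p - 1)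
    (T h R Cp C : ℝ)
    (hT : 0 < T) (hh : 1 ≤ h) (hR : 1 < R) (hCp : 0 < Cp) (hC : 0 < C)
    (ap : ℝ → ℝ → ℝ)
    (hap_diff : ∀ t ∈ Set.Icc (0:ℝ) T, Differentiable ℝ (ap t))
    (hap_low : ∀ t ∈ Set.Icc (0:ℝ) T, ∀ ξ : ℝ, R ≤ |ξ| →
      Cp * |ξ| ^ (p - 1) ≤ |deriv (ap t) ξ|)
    (ω : ℝ → ℝ)
    (hω : ∀ t ∈ Set.Icc (0:ℝ) T, ∀ ξ : ℝ, R ≤ |ξ| →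
      ω ξ = Real.sign (deriv (ap t) ξ))
    (ψ : ℝ → ℝ) (hψ01 : ∀ y : ℝ, 0 ≤ ψ y ∧ ψ y ≤ 1)
    (hψ1 : ∀ y : ℝ, |y| ≤ 1 / 2 → ψ y = 1)
    (hψ0 : ∀ y : ℝ, 1 ≤ |y| → ψ y = 0)
    (b : ℝ → ℝ → ℝ → ℂ)
    (hb : ∀ t ∈ Set.Icc (0:ℝ) T, ∀ x ξ : ℝ,
      |(b t x ξ).im| ≤ C * jbh h ξ ^ ((p:ℝ) - n) * jb x ^ (-(((p:ℝ) - n) / ((p:ℝ) - 1))))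
    (M : ℝ) (hM : (2:ℝ) ^ (((p:ℝ) - 1) / 2) * C / Cp ≤ M) :
    ∃ C' > 0, ∀ t ∈ Set.Icc (0:ℝ) T, ∀ x ξ : ℝ, h * R ≤ |ξ| →
      -C' ≤ -(b t x ξ).im +
        M * deriv (ap t) ξ * ω (ξ / h) * jbh h ξ ^ (-(n:ℝ) + 1) *
          jb x ^ (-(((p:ℝ) - n) / ((p:ℝ) - 1))) *
          ψ (jb x / jbh h ξ ^ ((p:ℝ) - 1)) :=
  stmt12_general p n hp hnp T h R Cp C hh hR hCp hC ap hap_diff hap_low ω hω ψ hψ01 hψ1 b hb M hM
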